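/- Let N ≥ 3, η, γ real with η = −2(N−2) − γ²/2 and γ ≠ 0. Then the function F(a_1,...,a_{N+1}) = Σ_{1≤i<j≤N}(f(a_i−a_j)+f(a_i+a_j)) + ηΣ_{i=1}^N f(a_i) + (γ/6)(a_{N+1}³ + 3a_{N+1}Σ_{i=1}^N a_i²), with f'''(x)=coth(x), has F_{N+1} = γ·I (an (N+1)×(N+1) identity multiple), and all the third-derivative matrices F_1,...,F_{N+1} pairwise commute at every point with a_1,...,a_N nonzero and a_i ≠ ±a_j for i≠j ≤ N; hence F satisfies the original WDVV equations F_i F_{N+1}⁻¹ F_m = F_m F_{N+1}⁻¹ F_i. -/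

import Mathlib

open Finset

noncomputable def coth (x : ℝ) : ℝ := Real.cosh x / Real.sinh x

private lemma coth_eq_exp (x : ℝ) (hx : x ≠ 0) :
    coth x = (Real.exp (2*x) + 1) / (Real.exp (2*x) - 1) := by
  have h2 : Real.exp (2*x) = Real.exp x * Real.exp x := by rw [two_mul, Real.exp_add]
  have h1 : Real.exp (2*x) - 1 ≠ 0 := by
    rw [sub_ne_zero, Ne, Real.exp_eq_one_iff]
    intro h; exact hx (by linarith)
  have hs : Real.sinh x ≠ 0 := Real.sinh_ne_zero.mpr hx
  have hE : Real.exp x ≠ 0 := Real.exp_ne_zero x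
  have hs' : (Real.exp x - Real.exp (-x)) / 2 ≠ 0 := by
    rw [← Real.sinh_eq]; exact hs
  rw [coth, Real.sinh_eq, Real.cosh_eq]
  rw [div_eq_div_iff hs' h1]
  rw [Real.exp_neg] at *
  field_simp
  rw [h2]; ring

private lemma beta_exp (x y : ℝ) (h1 : x ≠ y) (h2 : x + y ≠ 0) :
    coth (x - y) + coth (x + y)
      = (Real.exp (2*x) + Real.exp (2*y)) / (Real.exp (2*x) - Real.exp (2*y))
        + (Real.exp (2*x) * Real.exp (2*y) + 1) / (Real.exp (2*x) * Real.exp (2*y) - 1) := by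
  have hXY : Real.exp (2*x) ≠ Real.exp (2*y) := by
    rw [Ne, Real.exp_eq_exp]; intro h; exact h1 (by linarith)
  have hY : Real.exp (2*y) ≠ 0 := Real.exp_ne_zero _
  have e1 : Real.exp (2*(x-y)) = Real.exp (2*x) / Real.exp (2*y) := by
    rw [eq_div_iff hY, ← Real.exp_add]; ring_nf
  have e2 : Real.exp (2*(x+y)) = Real.exp (2*x) * Real.exp (2*y) := by
    rw [← Real.exp_add]; ring_nf
  rw [coth_eq_exp _ (sub_ne_zero.mpr h1), coth_eq_exp _ h2, e1, e2]
  congr 1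
  have hXYs : Real.exp (2*x) - Real.exp (2*y) ≠ 0 := sub_ne_zero.mpr hXY
  rw [div_add' _ _ _ hY, div_sub' hY, div_div_div_cancel_right₀]
  · congr 1 <;> ring
  · exact hY

private lemma mul_sub_one_ne (x y : ℝ) (h : x + y ≠ 0) :
    Real.exp (2*x) * Real.exp (2*y) - 1 ≠ 0 := by
  rw [← Real.exp_add, sub_ne_zero, Ne, Real.exp_eq_one_iff]
  intro hh; exact h (by linarith)

private lemma sub_exp_ne (x y : ℝ) (h : x ≠ y) :
    Real.exp (2*x) - Real.exp (2*y) ≠ 0 := by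
  rw [sub_ne_zero, Ne, Real.exp_eq_exp]
  intro hh; exact h (by linarith)

private lemma cothI1 (x y z : ℝ)
    (hxy : x ≠ y) (hxy' : x + y ≠ 0) (hxz : x ≠ z) (hxz' : x + z ≠ 0)
    (hyz : y ≠ z) (hyz' : y + z ≠ 0) :
    (coth (y-x) + coth (y+x)) * (coth (z-x) + coth (z+x))
      = (coth (y-x) + coth (y+x)) * (coth (z-y) + coth (z+y))
        + (coth (z-x) + coth (z+x)) * (coth (y-z) + coth (y+z)) := by
  rw [beta_exp y x hxy.symm (by rw [add_comm]; exact hxy'),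
      beta_exp z x hxz.symm (by rw [add_comm]; exact hxz'),
      beta_exp z y hyz.symm (by rw [add_comm]; exact hyz'),
      beta_exp y z hyz hyz']
  have d1 := sub_exp_ne y x hxy.symm
  have d2 := sub_exp_ne z x hxz.symm
  have d3 := sub_exp_ne z y hyz.symm
  have d4 := sub_exp_ne y z hyz
  have m1 := mul_sub_one_ne y x (by rw [add_comm]; exact hxy')
  have m2 := mul_sub_one_ne z x (by rw [add_comm]; exact hxz')
  have m3 := mul_sub_one_ne z y (by rw [add_comm]; exact hyz')
  have m4 := mul_sub_one_ne y z hyz'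
  generalize Real.exp (2*x) = a at *
  generalize Real.exp (2*y) = b at *
  generalize Real.exp (2*z) = c at *
  have m2' : a * c - 1 ≠ 0 := by rw [mul_comm]; exact m2
  field_simp
  ring

private lemma cothI2 (x y z : ℝ)
    (hxy : x ≠ y) (hxy' : x + y ≠ 0) (hxz : x ≠ z) (hxz' : x + z ≠ 0)
    (hyz : y ≠ z) (hyz' : y + z ≠ 0) :
    (coth (x-y) + coth (x+y)) * (coth (x-z) + coth (x+z))
      + (coth (y-x) + coth (y+x)) * (coth (y-z) + coth (y+z))
      + (coth (z-x) + coth (z+x)) * (coth (z-y) + coth (z+y)) = 4 := by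
  rw [beta_exp x y hxy hxy', beta_exp x z hxz hxz',
      beta_exp y x hxy.symm (by rw [add_comm]; exact hxy'),
      beta_exp z x hxz.symm (by rw [add_comm]; exact hxz'),
      beta_exp z y hyz.symm (by rw [add_comm]; exact hyz'),
      beta_exp y z hyz hyz']
  have d0 := sub_exp_ne x y hxy
  have d0' := sub_exp_ne x z hxz
  have d1 := sub_exp_ne y x hxy.symm
  have d2 := sub_exp_ne z x hxz.symm
  have d3 := sub_exp_ne z y hyz.symm
  have d4 := sub_exp_ne y z hyz
  have m1 := mul_sub_one_ne y x (by rw [add_comm]; exact hxy')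
  have m2 := mul_sub_one_ne z x (by rw [add_comm]; exact hxz')
  have m3 := mul_sub_one_ne z y (by rw [add_comm]; exact hyz')
  have m4 := mul_sub_one_ne y z hyz'
  have m0 := mul_sub_one_ne x y hxy'
  have m0' := mul_sub_one_ne x z hxz'
  field_simp
  ring

private lemma cothI3 (x y : ℝ) (hx : x ≠ 0) (hy : y ≠ 0)
    (hxy : x ≠ y) (hxy' : x + y ≠ 0) :
    coth x * (coth (x-y) + coth (x+y)) + coth y * (coth (y-x) + coth (y+x)) = 2 := by
  rw [beta_exp x y hxy hxy',
      beta_exp y x hxy.symm (by rw [add_comm]; exact hxy'),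
      coth_eq_exp x hx, coth_eq_exp y hy]
  have d0 := sub_exp_ne x y hxy
  have d1 := sub_exp_ne y x hxy.symm
  have m0 := mul_sub_one_ne x y hxy'
  have m1 := mul_sub_one_ne y x (by rw [add_comm]; exact hxy')
  have e1 : Real.exp (2*x) - 1 ≠ 0 := by
    rw [sub_ne_zero, Ne, Real.exp_eq_one_iff]; intro hh; exact hx (by linarith)
  have e2 : Real.exp (2*y) - 1 ≠ 0 := by
    rw [sub_ne_zero, Ne, Real.exp_eq_one_iff]; intro hh; exact hy (by linarith)
  field_simp
  ring

noncomputable def gm {α : Type*} [DecidableEq α] (β : α → α → ℝ) (K : α → ℝ) (a b c : α) : ℝ :=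
  (if a = b then 1 else 0) * (if b = c then 1 else 0) * K a
  + (if a = b then 1 else 0) * (1 - if a = c then 1 else 0) * β c a
  + (if a = c then 1 else 0) * (1 - if a = b then 1 else 0) * β b a
  + (if b = c then 1 else 0) * (1 - if a = b then 1 else 0) * β a b

private lemma gm_diag {α : Type*} [DecidableEq α] (β : α → α → ℝ) (K : α → ℝ) (a q : α) :
    gm β K a a q = if a = q then K a else β q a := by
  by_cases h : a = q <;> simp [gm, h]

private lemma gm_eq {α : Type*} [DecidableEq α] (β : α → α → ℝ) (K : α → ℝ) {a b : α}
    (h : a ≠ b) (q : α) :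
    gm β K a b q = (if a = q then β b a else 0) + (if b = q then β a b else 0) := by
  by_cases h1 : a = q
  · subst h1; simp [gm, h, Ne.symm h]
  · by_cases h2 : b = q
    · subst h2; simp [gm, h, h1]
    · simp [gm, h, h1, h2]

private lemma gm_symm {α : Type*} [DecidableEq α] (β : α → α → ℝ) (K : α → ℝ) (a b c : α) :
    gm β K a b c = gm β K a c b := by
  by_cases h1 : a = b
  · subst h1
    by_cases h2 : a = c
    · subst h2; rfl
    · simp [gm, h2, Ne.symm h2]
  · by_cases h2 : a = c
    · subst h2; simp [gm, h1, Ne.symm h1]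
    · by_cases h3 : b = c
      · subst h3; rfl
      · simp [gm, h1, h2, h3, Ne.symm h3]

theorem bcd_extra_variable (N : ℕ) (hN : 3 ≤ N) (η γ : ℝ)
    (hη : η = -2 * ((N : ℝ) - 2) - γ ^ 2 / 2) (hγ : γ ≠ 0)
    (A : Fin (N + 1) → ℝ)
    (hA0 : ∀ i, i ≠ Fin.last N → A i ≠ 0)
    (hAd : ∀ i j, i ≠ Fin.last N → j ≠ Fin.last N → i ≠ j → A i ≠ A j ∧ A i ≠ -A j)
    (β : Fin (N + 1) → Fin (N + 1) → ℝ)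
    (hβ : ∀ i j, β i j = if i = j then 0 else coth (A i - A j) + coth (A i + A j))
    (K : Fin (N + 1) → ℝ)
    (hK : ∀ k, K k = (∑ q ∈ (univ.erase k).erase (Fin.last N), β k q) + η * coth (A k))
    (F : Fin (N + 1) → Matrix (Fin (N + 1)) (Fin (N + 1)) ℝ)
    (hF : ∀ i j k, F i j k =
      γ * (if i = Fin.last N then 1 else 0) * (if j = k then 1 else 0)
      + γ * (if j = Fin.last N then 1 else 0) * (if i = k then 1 else 0)
      + γ * (if k = Fin.last N then 1 else 0) * (if i = j then 1 else 0)
      - 2 * γ * (if i = Fin.last N then 1 else 0) * (if j = Fin.last N then 1 else 0) *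
          (if k = Fin.last N then 1 else 0)
      + (if i ≠ Fin.last N ∧ j ≠ Fin.last N ∧ k ≠ Fin.last N then 1 else 0) *
          ((if i = j then 1 else 0) * (if j = k then 1 else 0) * K i
            + (if i = j then 1 else 0) * (1 - if i = k then 1 else 0) * β k i
            + (if i = k then 1 else 0) * (1 - if i = j then 1 else 0) * β j i
            + (if j = k then 1 else 0) * (1 - if i = j then 1 else 0) * β i j)) :
    F (Fin.last N) = γ • (1 : Matrix (Fin (N + 1)) (Fin (N + 1)) ℝ) ∧
    (∀ i m, F i * F m = F m * F i) ∧
    (∀ i m, F i * (F (Fin.last N))⁻¹ * F m = F m * (F (Fin.last N))⁻¹ * F i) := by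
  set L := Fin.last N with hLdef
  -- Part 1
  have hFL : F L = γ • (1 : Matrix (Fin (N + 1)) (Fin (N + 1)) ℝ) := by
    ext j k
    rw [hF, Matrix.smul_apply, Matrix.one_apply]
    rcases eq_or_ne j k with rfl | hjk
    · by_cases hj : j = L
      · simp [hj]; ring
      · simp [hj]
    · by_cases hj : j = L <;> by_cases hk : k = L
      · exact absurd (hj.trans hk.symm) hjk
      · simp [hj, hk, hjk, Ne.symm hk]
      · simp [hj, hk, hjk, Ne.symm hj]
      · simp [hj, hk, hjk]
  -- rewriting F in terms of gm
  have hFg : ∀ a b c : Fin (N+1), a ≠ L → F a b c =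
      γ * (if b = L then 1 else 0) * (if a = c then 1 else 0)
      + γ * (if c = L then 1 else 0) * (if a = b then 1 else 0)
      + (if b = L then 0 else 1) * (if c = L then 0 else 1) * gm β K a b c := by
    intro a b c ha
    rw [hF, gm]
    by_cases hb : b = L <;> by_cases hc : c = L <;> simp [ha, hb, hc] <;> ring
  -- the closed form of the product sums
  have key : ∀ a b : Fin (N+1), a ≠ L → b ≠ L → a ≠ b → ∀ j l : Fin (N+1),
      (∑ q, F a j q * F b q l) =
        γ^2 * ((if a = j then 1 else 0) * (if b = l then 1 else 0))
        + γ * (if j = L then 1 else 0) * ((if l = L then 0 else 1) * gm β K b l a)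
        + γ * (if l = L then 1 else 0) * ((if j = L then 0 else 1) * gm β K a j b)
        + (if j = L then 0 else 1) * (if l = L then 0 else 1) *
            ∑ q ∈ univ.erase L, gm β K a j q * gm β K b l q := by
    intro a b ha hb hab j l
    rw [← Finset.add_sum_erase _ _ (Finset.mem_univ L)]
    have hhead : F a j L * F b L l = γ^2 * ((if a = j then 1 else 0) * (if b = l then 1 else 0)) := by
      rw [hFg a j L ha, hFg b L l hb]
      simp [ha, hb]
      ring
    have hbody : ∀ q ∈ univ.erase L, F a j q * F b q l =
        (if a = q then γ * (if j = L then 1 else 0) * ((if l = L then 0 else 1) * gm β K b l q) else 0)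
        + (if b = q then γ * (if l = L then 1 else 0) * ((if j = L then 0 else 1) * gm β K a j q) else 0)
        + ((if j = L then 0 else 1) * (if l = L then 0 else 1)) * (gm β K a j q * gm β K b l q) := by
      intro q hq
      rw [Finset.mem_erase] at hq
      rw [hFg a j q ha, hFg b q l hb, gm_symm β K b q l]
      rcases eq_or_ne a q with rfl | haq
      · rcases eq_or_ne b a with rfl | hba
        · exact absurd rfl hab
        · by_cases hj' : j = L <;> by_cases hl' : l = L <;>
            simp [ha, hb, hba, hj', hl'] <;> ring
      · rcases eq_or_ne b q with rfl | hbq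
        · by_cases hj' : j = L <;> by_cases hl' : l = L <;>
            simp [ha, hb, haq, hq.1, Ne.symm haq, hj', hl'] <;> ring
        · by_cases hj' : j = L <;> by_cases hl' : l = L <;>
            simp [ha, hb, haq, hbq, hq.1, Ne.symm haq, Ne.symm hbq, hj', hl'] <;> ring
    rw [Finset.sum_congr rfl hbody, Finset.sum_add_distrib, Finset.sum_add_distrib,
        Finset.sum_ite_eq, Finset.sum_ite_eq, ← Finset.mul_sum, hhead]
    simp [Finset.mem_erase, ha, hb]
    ring
  -- main commutation
  have hcomm : ∀ i m, F i * F m = F m * F i := by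
    intro i m
    rcases eq_or_ne i L with rfl | hi
    · rw [hFL]; simp [Matrix.smul_mul, Matrix.mul_smul]
    rcases eq_or_ne m L with rfl | hm
    · rw [hFL]; simp [Matrix.smul_mul, Matrix.mul_smul]
    rcases eq_or_ne i m with rfl | him
    · rfl
    have hc : ∀ j l : Fin (N+1), j ≠ L → l ≠ L →
        (∑ q ∈ univ.erase L, gm β K i j q * gm β K m l q)
          = (∑ q ∈ univ.erase L, gm β K m j q * gm β K i l q)
            + γ^2 * ((if m = j then 1 else 0) * (if i = l then 1 else 0)
                     - (if i = j then 1 else 0) * (if m = l then 1 else 0)) := by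
      intro j l hj hl
      have hβne : ∀ p q : Fin (N+1), p ≠ q → β p q = coth (A p - A q) + coth (A p + A q) :=
        fun p q h => by rw [hβ, if_neg h]
      have hdist : ∀ p q : Fin (N+1), p ≠ L → q ≠ L → p ≠ q → A p ≠ A q ∧ A p + A q ≠ 0 := by
        intro p q hp hq hpq
        obtain ⟨h1, h2⟩ := hAd p q hp hq hpq
        exact ⟨h1, fun h => h2 (by linarith)⟩
      have I1 : ∀ p q r : Fin (N+1), p ≠ L → q ≠ L → r ≠ L → p ≠ q → p ≠ r → q ≠ r →
          β q p * β r p = β q p * β r q + β r p * β q r := by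
        intro p q r hp hq hr hpq hpr hqr
        obtain ⟨d1, d1'⟩ := hdist p q hp hq hpq
        obtain ⟨d2, d2'⟩ := hdist p r hp hr hpr
        obtain ⟨d3, d3'⟩ := hdist q r hq hr hqr
        rw [hβne q p (Ne.symm hpq), hβne r p (Ne.symm hpr), hβne r q (Ne.symm hqr),
          hβne q r hqr]
        exact cothI1 (A p) (A q) (A r) d1 d1' d2 d2' d3 d3'
      have I2 : ∀ q : Fin (N+1), q ≠ L → q ≠ i → q ≠ m →
          β i m * β i q + β m i * β m q + β q i * β q m = 4 := by
        intro q hq hqi hqm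
        obtain ⟨d1, d1'⟩ := hdist i m hi hm him
        obtain ⟨d2, d2'⟩ := hdist i q hi hq (Ne.symm hqi)
        obtain ⟨d3, d3'⟩ := hdist m q hm hq (Ne.symm hqm)
        rw [hβne i m him, hβne i q (Ne.symm hqi), hβne m i (Ne.symm him),
          hβne m q (Ne.symm hqm), hβne q i hqi, hβne q m hqm]
        exact cothI2 (A i) (A m) (A q) d1 d1' d2 d2' d3 d3'
      have I3 : coth (A i) * β i m + coth (A m) * β m i = 2 := by
        obtain ⟨d1, d1'⟩ := hdist i m hi hm him
        rw [hβne i m him, hβne m i (Ne.symm him)]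
        exact cothI3 (A i) (A m) (hA0 i hi) (hA0 m hm) d1 d1'
      have memL : ∀ p : Fin (N+1), p ≠ L → p ∈ univ.erase L :=
        fun p hp => Finset.mem_erase.mpr ⟨hp, Finset.mem_univ p⟩
      have hmemm : m ∈ (univ.erase L).erase i := Finset.mem_erase.mpr ⟨him.symm, memL m hm⟩
      have hmemi : i ∈ (univ.erase L).erase m := Finset.mem_erase.mpr ⟨him, memL i hi⟩
      set D := ((univ.erase L).erase i).erase m with hD
      have hDmem : ∀ q ∈ D, q ≠ L ∧ q ≠ i ∧ q ≠ m := by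
        intro q hq
        rw [hD, Finset.mem_erase, Finset.mem_erase, Finset.mem_erase] at hq
        exact ⟨hq.2.2.1, hq.2.1, hq.1⟩
      have split : ∀ f : Fin (N+1) → ℝ, (∑ q ∈ univ.erase L, f q)
          = f i + f m + ∑ q ∈ D, f q := by
        intro f
        rw [← Finset.add_sum_erase _ f (memL i hi), ← Finset.add_sum_erase _ f hmemm]
        ring
      have Ed : ∀ q, gm β K i i q = if i = q then K i else β q i := fun q => gm_diag β K i q
      have Ed' : ∀ q, gm β K m m q = if m = q then K m else β q m := fun q => gm_diag β K m q
      have Eim : ∀ q, gm β K i m q = (if i = q then β m i else 0) + (if m = q then β i m else 0) :=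
        fun q => gm_eq β K him q
      have Emi : ∀ q, gm β K m i q = (if m = q then β i m else 0) + (if i = q then β m i else 0) :=
        fun q => gm_eq β K (Ne.symm him) q
      have vII : gm β K i i i = K i := by rw [Ed, if_pos rfl]
      have vIIm : gm β K i i m = β m i := by rw [Ed, if_neg him]
      have vMM : gm β K m m m = K m := by rw [Ed', if_pos rfl]
      have vMMi : gm β K m m i = β i m := by rw [Ed', if_neg (Ne.symm him)]
      have vMIi : gm β K m i i = β m i := by rw [Emi]; simp [Ne.symm him]
      have vMIm : gm β K m i m = β i m := by rw [Emi]; simp [him]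
      have vIMi : gm β K i m i = β m i := by rw [Eim]; simp [Ne.symm him]
      have vIMm : gm β K i m m = β i m := by rw [Eim]; simp [him]
      have hKi : K i = β i m + (∑ q ∈ D, β i q) + η * coth (A i) := by
        rw [hK i]
        congr 1
        rw [Finset.erase_right_comm, ← Finset.add_sum_erase _ _ hmemm]
      have hKm : K m = β m i + (∑ q ∈ D, β m q) + η * coth (A m) := by
        rw [hK m]
        congr 1
        have hcomm' : ((univ.erase L).erase m).erase i = D := Finset.erase_right_comm
        rw [Finset.erase_right_comm, ← Finset.add_sum_erase _ _ hmemi, hcomm']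
      have hI2sum : β i m * (∑ q ∈ D, β i q) + β m i * (∑ q ∈ D, β m q)
          + (∑ q ∈ D, β q i * β q m) = 4 * ((N : ℝ) - 2) := by
        rw [Finset.mul_sum, Finset.mul_sum, ← Finset.sum_add_distrib, ← Finset.sum_add_distrib]
        rw [Finset.sum_congr rfl (fun q hq => by
          obtain ⟨h1, h2, h3⟩ := hDmem q hq
          exact I2 q h1 h2 h3), Finset.sum_const, nsmul_eq_mul]
        have hcard : D.card = N - 2 := by
          rw [hD, Finset.card_erase_of_mem hmemm, Finset.card_erase_of_mem (memL i hi),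
            Finset.card_erase_of_mem (Finset.mem_univ L), Finset.card_univ, Fintype.card_fin]
          omega
        rw [hcard, Nat.cast_sub (by omega)]
        push_cast
        ring
      by_cases hji : j = i
      · by_cases hli : l = i
        · -- (i, i)
          rw [hji, hli,
            Finset.sum_congr rfl (fun q _ => mul_comm (gm β K i i q) (gm β K m i q))]
          simp [him, Ne.symm him]
        · by_cases hlm : l = m
          · -- (i, m) : the main case
            rw [hji, hlm, split (fun q => gm β K i i q * gm β K m m q),
              split (fun q => gm β K m i q * gm β K i m q)]
            have hL1 : ∑ q ∈ D, gm β K i i q * gm β K m m q = ∑ q ∈ D, β q i * β q m :=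
              Finset.sum_congr rfl fun q hq => by
                obtain ⟨h1, h2, h3⟩ := hDmem q hq
                rw [Ed, Ed']
                simp [Ne.symm h2, Ne.symm h3]
            have hL2 : ∑ q ∈ D, gm β K m i q * gm β K i m q = 0 :=
              Finset.sum_eq_zero fun q hq => by
                obtain ⟨h1, h2, h3⟩ := hDmem q hq
                rw [Emi, Eim]
                simp [Ne.symm h2, Ne.symm h3]
            rw [hL1, hL2, vII, vMM, vIIm, vMMi, vMIi, vMIm, vIMi, vIMm]
            simp only [eq_self_iff_true, if_true, if_neg him, if_neg (Ne.symm him)]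
            linear_combination (β i m) * hKi + (β m i) * hKm + hI2sum + η * I3 + 2 * hη
          · -- (i, o)
            have hil : i ≠ l := fun h => hli h.symm
            have hml : m ≠ l := fun h => hlm h.symm
            have hIL : ∀ q, gm β K i l q = (if i = q then β l i else 0) + (if l = q then β i l else 0) :=
              fun q => gm_eq β K (fun h => hli h.symm) q
            have hML : ∀ q, gm β K m l q = (if m = q then β l m else 0) + (if l = q then β m l else 0) :=
              fun q => gm_eq β K (fun h => hlm h.symm) q
            rw [hji, split (fun q => gm β K i i q * gm β K m l q),
              split (fun q => gm β K m i q * gm β K i l q)]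
            have hL1 : ∑ q ∈ D, gm β K i i q * gm β K m l q
                = ∑ q ∈ D, (if l = q then β q i * β m l else 0) :=
              Finset.sum_congr rfl fun q hq => by
                obtain ⟨h1, h2, h3⟩ := hDmem q hq
                rw [Ed, hML]
                by_cases hlq : l = q <;> simp [hlq, Ne.symm h2, Ne.symm h3]
            have hL2 : ∑ q ∈ D, gm β K m i q * gm β K i l q = 0 :=
              Finset.sum_eq_zero fun q hq => by
                obtain ⟨h1, h2, h3⟩ := hDmem q hq
                rw [Emi]
                simp [Ne.symm h2, Ne.symm h3]
            have hlD : l ∈ D := by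
              rw [hD]
              exact Finset.mem_erase.mpr ⟨hlm, Finset.mem_erase.mpr ⟨hli, memL l hl⟩⟩
            rw [hL1, hL2, Finset.sum_ite_eq, if_pos hlD]
            simp only [vII, vIIm, vMIi, vMIm, hIL, hML]
            simp [him, Ne.symm him, hli, hlm, hil, hml]
            linear_combination (-1 : ℝ) * I1 i m l hi hm hl him hil hml
      · by_cases hjm : j = m
        · by_cases hli : l = i
          · -- (m, i) : main mirror
            rw [hjm, hli, split (fun q => gm β K i m q * gm β K m i q),
              split (fun q => gm β K m m q * gm β K i i q)]
            have hL1 : ∑ q ∈ D, gm β K i m q * gm β K m i q = 0 :=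
              Finset.sum_eq_zero fun q hq => by
                obtain ⟨h1, h2, h3⟩ := hDmem q hq
                rw [Emi, Eim]
                simp [Ne.symm h2, Ne.symm h3]
            have hL2 : ∑ q ∈ D, gm β K m m q * gm β K i i q = ∑ q ∈ D, β q i * β q m :=
              Finset.sum_congr rfl fun q hq => by
                obtain ⟨h1, h2, h3⟩ := hDmem q hq
                rw [Ed, Ed']
                simp [Ne.symm h2, Ne.symm h3, mul_comm]
            rw [hL1, hL2, vII, vMM, vIIm, vMMi, vMIi, vMIm, vIMi, vIMm]
            simp only [eq_self_iff_true, if_true, if_neg him, if_neg (Ne.symm him)]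
            linear_combination (-(β i m)) * hKi + (-(β m i)) * hKm - hI2sum - η * I3 - 2 * hη
          · by_cases hlm : l = m
            · -- (m, m)
              rw [hjm, hlm,
                Finset.sum_congr rfl (fun q _ => mul_comm (gm β K i m q) (gm β K m m q))]
              simp [him, Ne.symm him]
            · -- (m, o)
              have hil : i ≠ l := fun h => hli h.symm
              have hml : m ≠ l := fun h => hlm h.symm
              have hIL : ∀ q, gm β K i l q = (if i = q then β l i else 0) + (if l = q then β i l else 0) :=
                fun q => gm_eq β K (fun h => hli h.symm) q
              have hML : ∀ q, gm β K m l q = (if m = q then β l m else 0) + (if l = q then β m l else 0) :=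
                fun q => gm_eq β K (fun h => hlm h.symm) q
              rw [hjm, split (fun q => gm β K i m q * gm β K m l q),
                split (fun q => gm β K m m q * gm β K i l q)]
              have hL1 : ∑ q ∈ D, gm β K i m q * gm β K m l q = 0 :=
                Finset.sum_eq_zero fun q hq => by
                  obtain ⟨h1, h2, h3⟩ := hDmem q hq
                  rw [Eim]
                  simp [Ne.symm h2, Ne.symm h3]
              have hL2 : ∑ q ∈ D, gm β K m m q * gm β K i l q
                  = ∑ q ∈ D, (if l = q then β q m * β i l else 0) :=
                Finset.sum_congr rfl fun q hq => by
                  obtain ⟨h1, h2, h3⟩ := hDmem q hq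
                  rw [Ed', hIL]
                  by_cases hlq : l = q <;> simp [hlq, Ne.symm h2, Ne.symm h3, mul_comm]
              have hlD : l ∈ D := by
                rw [hD]
                exact Finset.mem_erase.mpr ⟨hlm, Finset.mem_erase.mpr ⟨hli, memL l hl⟩⟩
              rw [hL1, hL2, Finset.sum_ite_eq, if_pos hlD]
              simp only [vMM, vMMi, vIMi, vIMm, hIL, hML]
              simp [him, Ne.symm him, hli, hlm, hil, hml]
              linear_combination I1 m i l hm hi hl (Ne.symm him) hml hil
        · -- j = o
          have hij : i ≠ j := fun h => hji h.symm
          have hmj : m ≠ j := fun h => hjm h.symm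
          have hJI : ∀ q, gm β K i j q = (if i = q then β j i else 0) + (if j = q then β i j else 0) :=
            fun q => gm_eq β K (fun h => hji h.symm) q
          have hJM : ∀ q, gm β K m j q = (if m = q then β j m else 0) + (if j = q then β m j else 0) :=
            fun q => gm_eq β K (fun h => hjm h.symm) q
          have hjD : j ∈ D := by
            rw [hD]
            exact Finset.mem_erase.mpr ⟨hjm, Finset.mem_erase.mpr ⟨hji, memL j hj⟩⟩
          by_cases hli : l = i
          · -- (o, i)
            rw [hli, split (fun q => gm β K i j q * gm β K m i q),
              split (fun q => gm β K m j q * gm β K i i q)]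
            have hL1 : ∑ q ∈ D, gm β K i j q * gm β K m i q = 0 :=
              Finset.sum_eq_zero fun q hq => by
                obtain ⟨h1, h2, h3⟩ := hDmem q hq
                rw [Emi]
                simp [Ne.symm h2, Ne.symm h3]
            have hL2 : ∑ q ∈ D, gm β K m j q * gm β K i i q
                = ∑ q ∈ D, (if j = q then β m j * β q i else 0) :=
              Finset.sum_congr rfl fun q hq => by
                obtain ⟨h1, h2, h3⟩ := hDmem q hq
                rw [Ed, hJM]
                by_cases hjq : j = q <;> simp [hjq, Ne.symm h2, Ne.symm h3, mul_comm]
            rw [hL1, hL2, Finset.sum_ite_eq, if_pos hjD]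
            simp only [vII, vIIm, vMIi, vMIm, hJI, hJM]
            simp [him, Ne.symm him, hji, hjm, hij, hmj]
            linear_combination I1 i j m hi hj hm hij him (fun h : j = m => hjm h)
          · by_cases hlm : l = m
            · -- (o, m)
              rw [hlm, split (fun q => gm β K i j q * gm β K m m q),
                split (fun q => gm β K m j q * gm β K i m q)]
              have hL1 : ∑ q ∈ D, gm β K i j q * gm β K m m q
                  = ∑ q ∈ D, (if j = q then β i j * β q m else 0) :=
                Finset.sum_congr rfl fun q hq => by
                  obtain ⟨h1, h2, h3⟩ := hDmem q hq
                  rw [Ed', hJI]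
                  by_cases hjq : j = q <;> simp [hjq, Ne.symm h2, Ne.symm h3, mul_comm]
              have hL2 : ∑ q ∈ D, gm β K m j q * gm β K i m q = 0 :=
                Finset.sum_eq_zero fun q hq => by
                  obtain ⟨h1, h2, h3⟩ := hDmem q hq
                  rw [Eim]
                  simp [Ne.symm h2, Ne.symm h3]
              rw [hL1, hL2, Finset.sum_ite_eq, if_pos hjD]
              simp only [vMM, vMMi, vIMi, vIMm, hJI, hJM]
              simp [him, Ne.symm him, hji, hjm, hij, hmj]
              linear_combination (-1 : ℝ) * I1 m i j hm hi hj (Ne.symm him) hmj hij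
            · -- (o, o)
              have hil : i ≠ l := fun h => hli h.symm
              have hml : m ≠ l := fun h => hlm h.symm
              have hIL : ∀ q, gm β K i l q = (if i = q then β l i else 0) + (if l = q then β i l else 0) :=
                fun q => gm_eq β K (fun h => hli h.symm) q
              have hML : ∀ q, gm β K m l q = (if m = q then β l m else 0) + (if l = q then β m l else 0) :=
                fun q => gm_eq β K (fun h => hlm h.symm) q
              rw [split (fun q => gm β K i j q * gm β K m l q),
                split (fun q => gm β K m j q * gm β K i l q)]
              have hL1 : ∑ q ∈ D, gm β K i j q * gm β K m l q
                  = ∑ q ∈ D, (if j = q then (if l = q then β i j * β m l else 0) else 0) :=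
                Finset.sum_congr rfl fun q hq => by
                  obtain ⟨h1, h2, h3⟩ := hDmem q hq
                  rw [hJI, hML]
                  by_cases hjq : j = q <;> by_cases hlq : l = q <;>
                    simp [hjq, hlq, Ne.symm h2, Ne.symm h3]
              have hL2 : ∑ q ∈ D, gm β K m j q * gm β K i l q
                  = ∑ q ∈ D, (if j = q then (if l = q then β m j * β i l else 0) else 0) :=
                Finset.sum_congr rfl fun q hq => by
                  obtain ⟨h1, h2, h3⟩ := hDmem q hq
                  rw [hJM, hIL]
                  by_cases hjq : j = q <;> by_cases hlq : l = q <;>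
                    simp [hjq, hlq, Ne.symm h2, Ne.symm h3]
              rw [hL1, hL2, Finset.sum_ite_eq, Finset.sum_ite_eq, if_pos hjD, if_pos hjD]
              simp only [hJI, hJM, hIL, hML]
              by_cases hjl : j = l
              · simp [him, Ne.symm him, hji, hjm, hli, hlm, hjl, hij, hmj, hil, hml]
                try ring
              · have hlj : l ≠ j := fun h => hjl h.symm
                simp [him, Ne.symm him, hji, hjm, hli, hlm, hjl, hlj, hij, hmj, hil, hml]
    ext j l
    rw [Matrix.mul_apply, Matrix.mul_apply, key i m hi hm him j l, key m i hm hi him.symm j l]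
    have e2 : gm β K m l i = gm β K i l m := by
      by_cases hli : l = i
      · rw [hli, gm_eq β K him.symm i, gm_diag]; simp [him, Ne.symm him]
      · by_cases hlm : l = m
        · rw [hlm, gm_diag, gm_eq β K him m]; simp [him, Ne.symm him]
        · rw [gm_eq β K (Ne.symm hlm) i, gm_eq β K (Ne.symm hli) m]
          simp [him, Ne.symm him, hli, hlm, Ne.symm hli, Ne.symm hlm]
    have e3 : gm β K i j m = gm β K m j i := by
      by_cases hji : j = i
      · rw [hji, gm_diag, gm_eq β K him.symm i]; simp [him, Ne.symm him]
      · by_cases hjm : j = m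
        · rw [hjm, gm_eq β K him m, gm_diag]; simp [him, Ne.symm him]
        · rw [gm_eq β K (Ne.symm hji) m, gm_eq β K (Ne.symm hjm) i]
          simp [him, Ne.symm him, hji, hjm, Ne.symm hji, Ne.symm hjm]
    rw [e2, e3]
    rcases eq_or_ne j L with rfl | hj
    · simp [hi, hm]
    rcases eq_or_ne l L with rfl | hl
    · simp [hi, hm]
    simp only [if_neg hj, if_neg hl]
    rw [hc j l hj hl]
    ring
  refine ⟨hFL, hcomm, ?_⟩
  intro i m
  have hinv : (F L)⁻¹ = γ⁻¹ • (1 : Matrix (Fin (N+1)) (Fin (N+1)) ℝ) := by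
    rw [hFL]
    refine Matrix.inv_eq_right_inv ?_
    rw [Matrix.smul_mul, Matrix.mul_smul]
    simp [smul_smul, mul_inv_cancel₀ hγ]
  rw [hinv]
  simp only [Matrix.mul_smul, Matrix.mul_one, Matrix.smul_mul]
  rw [hcomm i m]
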